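/- For all positive integers a and D, all rationals μ and ν, and every z = x + iy ∈ ℂ with y > 0: ∑_{r=0}^{D−1} (√(2ay)/√D) · θ[aμ + ar/D; ν](Dz/a) · θ[μ + r/D; −aν](−aD·conj(z)) = ∑_{(m,n)∈ℤ×ℤ} e^{2πi(mν + nDμ)} · e^{π(mni − |n−mz|²/(2y))·(D/a)}, where conj(z) = x − iy. -/

import Mathlib

open Complex

/-- The weight-1/2 theta function with characteristics `μ, ν ∈ ℚ`:
`θ[μ; ν](w) = ∑_{n ∈ ℤ+μ} exp(πin²w + 2πiνn)`. -/
noncomputable def thetaChar (μ ν : ℚ) (w : ℂ) : ℂ :=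
  ∑' n : ℤ, Complex.exp (Real.pi * Complex.I * ((n : ℂ) + (μ : ℂ)) ^ 2 * w
    + 2 * Real.pi * Complex.I * (ν : ℂ) * ((n : ℂ) + (μ : ℂ)))

open Real ComplexConjugate

/-! Multiplying out the two theta series turns each summand of the left side into a double
sum over `(j, k) ∈ ℤ²`. After the shear `j = m + a k` the summand depends on `k` and `r` only
through `l = D k + r`, so the sum over `r` and `k` collapses to a single sum over `l ∈ ℤ` of a
Gaussian in `(l + D μ) / D` whose quadratic coefficient is `2 a y / D`. Poisson summation in `l`
then produces the sum over `n`, and its factor `(2 a y / D) ^ (-1/2)` cancels the prefactor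
`√(2 a y) / √D`. -/

noncomputable def thetaSummand (ν w x : ℂ) : ℂ :=
  cexp (π * I * x ^ 2 * w + 2 * π * I * ν * x)

lemma thetaChar_eq_tsum (μ ν : ℚ) (w : ℂ) :
    thetaChar μ ν w = ∑' n : ℤ, thetaSummand ν w (n + μ) := rfl

lemma thetaSummand_intCast_add (ν w μ : ℂ) (n : ℤ) :
    thetaSummand ν w (n + μ) = thetaSummand ν w μ * jacobiTheta₂_term n (μ * w + ν) w := by
  rw [thetaSummand, thetaSummand, jacobiTheta₂_term, ← Complex.exp_add]
  ring_nf

lemma summable_norm_thetaSummand {w : ℂ} (hw : 0 < w.im) (ν μ : ℂ) :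
    Summable fun n : ℤ ↦ ‖thetaSummand ν w (n + μ)‖ := by
  simp_rw [thetaSummand_intCast_add, norm_mul]
  exact ((summable_jacobiTheta₂_term_iff _ _).mpr hw).norm.mul_left _

lemma hasSum_thetaChar_mul_thetaChar (a : ℤ) (s ν₁ ν₂ : ℚ) {τ₁ τ₂ : ℂ}
    (h₁ : 0 < τ₁.im) (h₂ : 0 < τ₂.im) :
    HasSum
      (fun p : ℤ × ℤ ↦
        thetaSummand ν₁ τ₁ (p.1 + a * (p.2 + s)) * thetaSummand ν₂ τ₂ (p.2 + s))
      (thetaChar (a * s) ν₁ τ₁ * thetaChar s ν₂ τ₂) := by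
  have hs₁ := summable_norm_thetaSummand h₁ ν₁ ((a * s : ℚ) : ℂ)
  have hs₂ := summable_norm_thetaSummand h₂ ν₂ s
  rw [thetaChar_eq_tsum, thetaChar_eq_tsum, tsum_mul_tsum_of_summable_norm hs₁ hs₂]
  let shear : ℤ × ℤ ≃ ℤ × ℤ :=
    { toFun p := (p.1 + a * p.2, p.2)
      invFun p := (p.1 - a * p.2, p.2)
      left_inv p := by simp
      right_inv p := by simp }
  refine (shear.hasSum_iff.mpr (summable_mul_of_summable_norm hs₁ hs₂).hasSum).congr_fun
    fun p ↦ ?_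
  simp only [Function.comp_apply, shear, Equiv.coe_fn_mk]
  push_cast
  ring_nf

lemma tsum_eq_sum_range_tsum_mul_add {E : Type*} [NormedAddCommGroup E] [CompleteSpace E]
    {f : ℤ → E} (hf : Summable f) (D : ℕ) [NeZero D] :
    ∑' l, f l = ∑ r ∈ Finset.range D, ∑' k : ℤ, f (k * D + r) := by
  let e : Fin D × ℤ ≃ ℤ := (Equiv.prodComm _ _).trans (Int.divModEquiv D).symm
  have he : Summable (f ∘ e) := e.summable_iff.mpr hf
  rw [← e.tsum_eq, show ∑' c, f (e c) = ∑' c, (f ∘ e) c from rfl, he.tsum_prod,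
    tsum_fintype, ← Fin.sum_univ_eq_sum_range]
  rfl

lemma summable_exp_neg_quadratic_add {A : ℂ} (hA : 0 < A.re) (B t : ℂ) :
    Summable fun l : ℤ ↦ cexp (-π * A * (l + t) ^ 2 + 2 * π * B * (l + t)) := by
  have hIA : 0 < (I * A).im := by
    simpa only [mul_im, I_re, I_im, zero_mul, one_mul, zero_add] using hA
  refine (summable_norm_thetaSummand hIA (-I * B) t).of_norm.congr fun l ↦ ?_
  rw [thetaSummand]
  congr 1
  ring_nf
  simp only [I_sq]
  ring

lemma tsum_exp_neg_quadratic_add {A : ℂ} (hA : 0 < A.re) (B t : ℂ) :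
    ∑' l : ℤ, cexp (-π * A * (l + t) ^ 2 + 2 * π * B * (l + t)) =
      1 / A ^ (1 / 2 : ℂ) *
        ∑' n : ℤ, cexp (-π / A * (n + I * B) ^ 2 + 2 * π * I * n * t) := by
  have hA0 : A ≠ 0 := fun h ↦ by simp [h] at hA
  calc ∑' l : ℤ, cexp (-π * A * (l + t) ^ 2 + 2 * π * B * (l + t))
      = ∑' l : ℤ, cexp (-π * A * t ^ 2 + 2 * π * B * t) *
          cexp (-π * A * l ^ 2 + 2 * π * (B - A * t) * l) := by
        refine tsum_congr fun l ↦ ?_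
        rw [← Complex.exp_add]
        ring_nf
    _ = 1 / A ^ (1 / 2 : ℂ) * ∑' n : ℤ, cexp (-π * A * t ^ 2 + 2 * π * B * t) *
          cexp (-π / A * (n + I * (B - A * t)) ^ 2) := by
        rw [tsum_mul_left, Complex.tsum_exp_neg_quadratic hA, tsum_mul_left]
        ring
    _ = _ := by
        congr 1
        refine tsum_congr fun n ↦ ?_
        rw [← Complex.exp_add]
        congr 1
        field_simp
        ring_nf
        simp only [I_sq]
        ring

lemma summable_exp_neg_mul_sq_int {δ : ℝ} (hδ : 0 < δ) :
    Summable fun n : ℤ ↦ rexp (-δ * n ^ 2) := by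
  refine (summable_pow_mul_jacobiTheta₂_term_bound 0 (div_pos hδ pi_pos) 0).congr fun n ↦ ?_
  field_simp
  ring_nf

-- The constant comes from `t ^ 2 ≤ 2 (t - s w.re) ^ 2 + 2 (s w.re) ^ 2`.
lemma mul_sq_add_sq_le_normSq_sub_mul (w : ℂ) (s t : ℝ) :
    w.im ^ 2 / (2 * (1 + w.re ^ 2 + w.im ^ 2)) * (s ^ 2 + t ^ 2) ≤ normSq (t - s * w) := by
  have hsq : normSq (t - s * w) = (t - s * w.re) ^ 2 + (s * w.im) ^ 2 := by
    simp only [normSq_apply, sub_re, sub_im, mul_re, mul_im, ofReal_re, ofReal_im]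
    ring
  rw [hsq, div_mul_eq_mul_div, div_le_iff₀ (by positivity)]
  nlinarith [mul_nonneg (sq_nonneg w.im) (sq_nonneg (t - 2 * s * w.re)),
    mul_nonneg (sq_nonneg w.re) (sq_nonneg (t - s * w.re)), sq_nonneg (t - s * w.re),
    mul_nonneg (sq_nonneg w.re) (sq_nonneg (s * w.im)), sq_nonneg (w.im ^ 2 * s)]

lemma summable_exp_neg_mul_normSq_sub_mul {c : ℝ} (hc : 0 < c) {w : ℂ} (hw : w.im ≠ 0) :
    Summable fun p : ℤ × ℤ ↦ rexp (-c * normSq (p.2 - p.1 * w)) := by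
  set ε := w.im ^ 2 / (2 * (1 + w.re ^ 2 + w.im ^ 2))
  have hε : 0 < ε := by positivity
  have hg := summable_exp_neg_mul_sq_int (mul_pos hc hε)
  refine (hg.mul_of_nonneg hg (fun _ ↦ (exp_pos _).le) fun _ ↦ (exp_pos _).le).of_nonneg_of_le
    (fun _ ↦ (exp_pos _).le) fun p ↦ ?_
  rw [← Real.exp_add, Real.exp_le_exp]
  have := mul_le_mul_of_nonneg_left (mul_sq_add_sq_le_normSq_sub_mul w p.1 p.2) hc.le
  push_cast at this ⊢
  linarith

noncomputable def factorizationSummand (a D : ℕ) (μ ν : ℚ) (z : ℂ) (m n : ℤ) : ℂ :=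
  cexp (2 * π * I * (m * ν + n * D * μ)) *
    cexp (π * (m * n * I - normSq (n - m * z) / (2 * z.im)) * (D / a))

lemma norm_factorizationSummand (a D : ℕ) (μ ν : ℚ) (z : ℂ) (m n : ℤ) :
    ‖factorizationSummand a D μ ν z m n‖ =
      rexp (-(π * D / (2 * z.im * a)) * normSq (n - m * z)) := by
  rw [factorizationSummand, norm_mul, norm_exp, norm_exp, ← Real.exp_add]
  congr 1
  have h1 :
      2 * π * I * (m * ν + n * D * μ) = ((2 * π * (m * ν + n * D * μ) : ℝ) : ℂ) * I := by
    push_cast; ring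
  have h2 : π * (m * n * I - normSq (n - m * z) / (2 * z.im)) * (D / a : ℂ)
      = ((-(π * D / (2 * z.im * a)) * normSq (n - m * z) : ℝ) : ℂ) +
          ((π * m * n * D / a : ℝ) : ℂ) * I := by
    push_cast; ring
  rw [h1, h2, mul_I_re, add_re, mul_I_re, ofReal_re, ofReal_im, ofReal_im]
  ring

lemma summable_factorizationSummand {a D : ℕ} (ha : 0 < a) (hD : 0 < D) (μ ν : ℚ) {z : ℂ}
    (hz : 0 < z.im) : Summable fun p : ℤ × ℤ ↦ factorizationSummand a D μ ν z p.1 p.2 := by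
  refine Summable.of_norm ?_
  simp_rw [norm_factorizationSummand]
  exact summable_exp_neg_mul_normSq_sub_mul (by positivity) hz.ne'

lemma conj_eq_sub_im_mul_I (z : ℂ) : conj z = z - 2 * z.im * I := by
  rw [← ofReal_ofNat, ← ofReal_mul, ← sub_conj]; ring

lemma thetaSummand_mul_thetaSummand_eq_gaussian {a D : ℂ} (ha : a ≠ 0) (hD : D ≠ 0)
    (ν z m x : ℂ) :
    thetaSummand ν (D * z / a) (m + a * (x / D)) * thetaSummand (-a * ν) (-a * D * conj z) (x / D)
      = cexp (π * I * D * z * m ^ 2 / a + 2 * π * I * ν * m) *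
        cexp (-π * (2 * a * z.im / D) * x ^ 2 + 2 * π * (I * z * m) * x) := by
  rw [thetaSummand, thetaSummand, ← Complex.exp_add, ← Complex.exp_add, conj_eq_sub_im_mul_I]
  congr 1
  field_simp
  ring_nf
  simp only [I_sq]
  ring

lemma ofReal_normSq_sub_mul {m n : ℂ} (hm : conj m = m) (hn : conj n = n) (z : ℂ) :
    (normSq (n - m * z) : ℂ) = (n - m * z) * (n - m * (z - 2 * z.im * I)) := by
  rw [← mul_conj, map_sub, map_mul, hm, hn, conj_eq_sub_im_mul_I]

lemma summable_thetaSummand_mul_thetaSummand {a D : ℕ} (ha : 0 < a) (hD : 0 < D)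
    (μ ν : ℚ) {z : ℂ} (hz : 0 < z.im) (m : ℤ) :
    Summable fun l : ℤ ↦
      thetaSummand ν (D * z / a) (m + a * ((l + D * μ) / D)) *
        thetaSummand (-a * ν) (-a * D * conj z) ((l + D * μ) / D) := by
  simp_rw [thetaSummand_mul_thetaSummand_eq_gaussian (Nat.cast_ne_zero.mpr ha.ne')
    (Nat.cast_ne_zero.mpr hD.ne')]
  refine (summable_exp_neg_quadratic_add ?_ _ _).mul_left _
  simp only [div_natCast_re, mul_re, re_ofNat, im_ofNat, natCast_re, natCast_im, ofReal_re,
    ofReal_im, mul_zero, sub_zero]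
  positivity

lemma sqrt_mul_tsum_thetaSummand_mul_thetaSummand {a D : ℕ} (ha : 0 < a) (hD : 0 < D)
    (μ ν : ℚ) {z : ℂ} (hz : 0 < z.im) (m : ℤ) :
    ((√(2 * a * z.im) / √D : ℝ) : ℂ) * ∑' l : ℤ,
        thetaSummand ν (D * z / a) (m + a * ((l + D * μ) / D)) *
          thetaSummand (-a * ν) (-a * D * conj z) ((l + D * μ) / D)
      = ∑' n : ℤ, factorizationSummand a D μ ν z m n := by
  have haC : (a : ℂ) ≠ 0 := Nat.cast_ne_zero.mpr ha.ne'
  have hDC : (D : ℂ) ≠ 0 := Nat.cast_ne_zero.mpr hD.ne'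
  have hyC : (z.im : ℂ) ≠ 0 := ofReal_ne_zero.mpr hz.ne'
  have hA : ((2 * a * z.im / D : ℝ) : ℂ) = 2 * a * z.im / D := by push_cast; ring
  have hApos : 0 < 2 * a * z.im / D := by positivity
  have hroot :
      (2 * a * z.im / D : ℂ) ^ (1 / 2 : ℂ) = ((√(2 * a * z.im) / √D : ℝ) : ℂ) := by
    rw [← hA, ← sqrt_div' _ (Nat.cast_nonneg D), sqrt_eq_rpow, ofReal_cpow hApos.le]
    norm_num
  have hsqrt :
      ((√(2 * a * z.im) / √D : ℝ) : ℂ) * (1 / (2 * a * z.im / D) ^ (1 / 2 : ℂ)) = 1 := by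
    rw [hroot, mul_one_div_cancel (ofReal_ne_zero.mpr (by positivity))]
  simp_rw [thetaSummand_mul_thetaSummand_eq_gaussian haC hDC]
  rw [tsum_mul_left, tsum_exp_neg_quadratic_add (by rw [← hA, ofReal_re]; exact hApos),
    mul_left_comm (cexp _), ← mul_assoc, hsqrt, one_mul, ← tsum_mul_left]
  refine tsum_congr fun n ↦ ?_
  rw [factorizationSummand, ofReal_normSq_sub_mul (map_intCast conj m) (map_intCast conj n),
    ← Complex.exp_add, ← Complex.exp_add]
  congr 1
  field_simp
  ring_nf
  simp only [I_sq, I_pow_four]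
  ring

/-- For `a, D ∈ ℤ_{>0}`, `μ, ν ∈ ℚ` and `z = x + iy` with `y > 0`:
`∑_{r=0}^{D−1} (√(2ay)/√D) θ[aμ + ar/D; ν](Dz/a) θ[μ + r/D; −aν](−aD·conj z)
  = ∑_{(m,n)} e^{2πi(mν + nDμ)} e^{π(mni − |n−mz|²/(2y))(D/a)}`. -/
theorem factorization_sum_formula (a D : ℕ) (ha : 0 < a) (hD : 0 < D)
    (μ ν : ℚ) (z : ℂ) (hz : 0 < z.im) :
    ∑ r ∈ Finset.range D,
      ((Real.sqrt (2 * a * z.im) / Real.sqrt D : ℝ) : ℂ) *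
        thetaChar ((a : ℚ) * μ + (a : ℚ) * (r : ℚ) / (D : ℚ)) ν ((D : ℂ) * z / (a : ℂ)) *
        thetaChar (μ + (r : ℚ) / (D : ℚ)) (-(a : ℚ) * ν) (-(a : ℂ) * (D : ℂ) * (starRingEnd ℂ) z)
    = ∑' p : ℤ × ℤ,
        Complex.exp (2 * Real.pi * Complex.I *
          ((p.1 : ℂ) * (ν : ℂ) + (p.2 : ℂ) * (D : ℂ) * (μ : ℂ))) *
        Complex.exp ((Real.pi : ℂ) * ((p.1 : ℂ) * (p.2 : ℂ) * Complex.I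
          - (Complex.normSq ((p.2 : ℂ) - (p.1 : ℂ) * z) : ℂ) / (2 * (z.im : ℂ)))
          * ((D : ℂ) / (a : ℂ))) := by
  have hDC : (D : ℂ) ≠ 0 := Nat.cast_ne_zero.mpr hD.ne'
  have : NeZero D := ⟨hD.ne'⟩
  have hτ₁ : 0 < ((D : ℂ) * z / a).im := by
    simp only [div_natCast_im, mul_im, natCast_re, natCast_im, zero_mul, add_zero]
    positivity
  have hτ₂ : 0 < (-(a : ℂ) * D * conj z).im := by
    simp only [neg_mul, neg_im, mul_im, mul_re, natCast_re, natCast_im, conj_re, conj_im, mul_zero,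
      zero_mul, sub_zero, add_zero, mul_neg, neg_neg]
    positivity
  have hprod (r : ℕ) := hasSum_thetaChar_mul_thetaChar a (μ + r / D) ν (-a * ν) hτ₁ hτ₂
  push_cast at hprod
  set c : ℂ := ((√(2 * a * z.im) / √D : ℝ) : ℂ)
  set Φ : ℤ → ℂ → ℂ := fun m u ↦
    thetaSummand ν (D * z / a) (m + a * u) * thetaSummand (-a * ν) (-a * D * conj z) u
  have hslice (m : ℤ) : Summable fun l : ℤ ↦ Φ m ((l + D * μ) / D) :=
    summable_thetaSummand_mul_thetaSummand ha hD μ ν hz m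
  have hres (k : ℤ) (r : ℕ) : (k : ℂ) + (μ + r / D) = ((k * D + r : ℤ) + D * μ) / D := by
    push_cast
    field_simp
    ring
  calc _ = ∑ r ∈ Finset.range D, c * ∑' m : ℤ, ∑' k : ℤ, Φ m (k + (μ + r / D)) := by
        refine Finset.sum_congr rfl fun r _ ↦ ?_
        rw [mul_assoc, mul_div_assoc, ← mul_add, ← (hprod r).tsum_eq,
          (hprod r).summable.tsum_prod]
    _ = c * ∑' m : ℤ, ∑' l : ℤ, Φ m ((l + D * μ) / D) := by
        rw [← Finset.mul_sum, ← Summable.tsum_finsetSum fun r _ ↦ (hprod r).summable.prod]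
        congr 1
        refine tsum_congr fun m ↦ ?_
        rw [tsum_eq_sum_range_tsum_mul_add (hslice m) D]
        simp only [hres]
        rfl
    _ = ∑' m : ℤ, ∑' n : ℤ, factorizationSummand a D μ ν z m n := by
        rw [← tsum_mul_left]
        exact tsum_congr (sqrt_mul_tsum_thetaSummand_mul_thetaSummand ha hD μ ν hz)
    _ = _ := (summable_factorizationSummand ha hD μ ν hz).tsum_prod.symm
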